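/- arXiv:1403.2945 — 2 statements merged into one kernel-verified Lean document; each statement's English description precedes it below -/
import Mathlib

section
/- Let A ∈ SL(n,ℤ), write A = [u₁ u₂ u₃ Q₁ ⋯ Q_{n−3}] (columns), and let the first three rows of A⁻¹ be read as n column 3-vectors v₁,...,v_n (i.e., (A⁻¹)_{a,i} = v_i^a for a=1,2,3). Then the map Λ⁺ = {n ∈ ℤ≥0ⁿ : Q_a · n = 0 for a = 1,...,n−3} → {m ∈ ℤ³ : vᵢ · m ≥ 0 for all i}, given by n ↦ m where m is determined through A⁻¹ by n_i = v_i · m, is a bijection, and under it n·ω = Σ_{a=1}^{3} m_a (A⁻¹ω)_a for every ω ∈ ℝⁿ. -/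
/-- Equivalence between the restricted-lattice and moment-map-cone descriptions.
Let `A ∈ SL(n,ℤ)` with (two-sided) inverse `B`, let `Q_a` (`a ≥ 3`) be the last
`n−3` columns of `A`, and let `vᵢ ∈ ℤ³` be given by the first three rows of `B`
(`vᵢ^a = B a i`).  Then the map `x ↦ m`, `m_a = Σᵢ A i a xᵢ` (for `a = 1,2,3`),
is a bijection from `Λ⁺ = {x ∈ ℤ≥0ⁿ : Q_a·x = 0}` onto
`{m ∈ ℤ³ : vᵢ·m ≥ 0 ∀i}`, and under it `x·ω = Σ_{a=1}^{3} m_a (A⁻¹ω)_a` for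
every `ω ∈ ℝⁿ`. -/
theorem lattice_cone_equivalence (n : ℕ) (hn : 3 ≤ n)
    (A B : Matrix (Fin n) (Fin n) ℤ) (hA : A.det = 1)
    (hAB : A * B = 1) (hBA : B * A = 1) :
    Set.BijOn (fun (x : Fin n → ℤ) (a : Fin 3) => ∑ i, A i (Fin.castLE hn a) * x i)
        {x | (∀ i, 0 ≤ x i) ∧ ∀ c : Fin n, 3 ≤ (c : ℕ) → ∑ i, A i c * x i = 0}
        {m | ∀ i : Fin n, 0 ≤ ∑ a : Fin 3, B (Fin.castLE hn a) i * m a} ∧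
      ∀ x : Fin n → ℤ,
        ((∀ i, 0 ≤ x i) ∧ ∀ c : Fin n, 3 ≤ (c : ℕ) → ∑ i, A i c * x i = 0) →
        ∀ ω : Fin n → ℝ,
          ∑ i, (x i : ℝ) * ω i =
            ∑ a : Fin 3, ((∑ i, A i (Fin.castLE hn a) * x i : ℤ) : ℝ) *
              ∑ i, (B (Fin.castLE hn a) i : ℝ) * ω i := by
  have hcast : Function.Injective (Fin.castLE hn) := Fin.castLE_injective hn
  have hABe : ∀ j i, ∑ c, A j c * B c i = if j = i then 1 else 0 := by
    intro j i
    have := congrArg (fun M => M j i) hAB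
    simpa [Matrix.mul_apply, Matrix.one_apply] using this
  have hBAe : ∀ a c, ∑ i, B a i * A i c = if a = c then 1 else 0 := by
    intro a c
    have := congrArg (fun M => M a c) hBA
    simpa [Matrix.mul_apply, Matrix.one_apply] using this
  -- reconstruction of x from its image
  have hrec : ∀ x : Fin n → ℤ,
      (∀ c : Fin n, 3 ≤ (c : ℕ) → ∑ i, A i c * x i = 0) →
      ∀ i, x i = ∑ a : Fin 3, B (Fin.castLE hn a) i * ∑ j, A j (Fin.castLE hn a) * x j := by
    intro x hx i
    have hfull : ∑ c : Fin n, B c i * ∑ j, A j c * x j = x i := by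
      have h1 : ∀ c, B c i * ∑ j, A j c * x j = ∑ j, x j * (A j c * B c i) := by
        intro c; rw [Finset.mul_sum]; exact Finset.sum_congr rfl fun j _ => by ring
      rw [Finset.sum_congr rfl fun c _ => h1 c, Finset.sum_comm]
      have h2 : ∀ j, ∑ c, x j * (A j c * B c i) = x j * if j = i then 1 else 0 := by
        intro j
        rw [← Finset.mul_sum, hABe]
      rw [Finset.sum_congr rfl fun j _ => h2 j]
      simp
    have himg : ∑ c : Fin n, B c i * ∑ j, A j c * x j
        = ∑ a : Fin 3, B (Fin.castLE hn a) i * ∑ j, A j (Fin.castLE hn a) * x j := by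
      have himg2 := Finset.sum_image (s := (Finset.univ : Finset (Fin 3)))
        (f := fun c => B c i * ∑ j, A j c * x j) (g := Fin.castLE hn)
        (fun a _ b _ h => hcast h)
      rw [← himg2]
      symm
      apply Finset.sum_subset (Finset.subset_univ _)
      intro c _ hc
      have h3 : 3 ≤ (c : ℕ) := by
        by_contra h
        push_neg at h
        exact hc (Finset.mem_image.2 ⟨⟨(c : ℕ), h⟩, Finset.mem_univ _, by
          ext; simp⟩)
      rw [hx c h3, mul_zero]
    rw [← himg, hfull]
  refine ⟨⟨?_, ?_, ?_⟩, ?_⟩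
  · -- MapsTo
    intro x hx i
    simp only [Set.mem_setOf_eq]
    rw [← hrec x hx.2 i]
    exact hx.1 i
  · -- InjOn
    intro x hx y hy hxy
    funext i
    rw [hrec x hx.2 i, hrec y hy.2 i]
    exact Finset.sum_congr rfl fun a _ =>
      congrArg (fun t => B (Fin.castLE hn a) i * t) (congrFun hxy a)
  · -- SurjOn
    intro m hm
    refine ⟨fun i => ∑ a : Fin 3, B (Fin.castLE hn a) i * m a, ⟨fun i => hm i, ?_⟩, ?_⟩
    · intro c hc
      have key : ∑ i, A i c * ∑ a : Fin 3, B (Fin.castLE hn a) i * m a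
          = ∑ a : Fin 3, (if Fin.castLE hn a = c then 1 else 0) * m a := by
        have h1 : ∀ i, A i c * ∑ a : Fin 3, B (Fin.castLE hn a) i * m a
            = ∑ a : Fin 3, (B (Fin.castLE hn a) i * A i c) * m a := by
          intro i; rw [Finset.mul_sum]; exact Finset.sum_congr rfl fun a _ => by ring
        rw [Finset.sum_congr rfl fun i _ => h1 i, Finset.sum_comm]
        exact Finset.sum_congr rfl fun a _ => by
          rw [← Finset.sum_mul, hBAe]
      rw [key]
      apply Finset.sum_eq_zero
      intro a _
      have : Fin.castLE hn a ≠ c := fun h => by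
        have := h ▸ hc
        simp at this
        omega
      simp [this]
    · funext b
      simp only
      have key : ∀ c, ∑ i, A i c * ∑ a : Fin 3, B (Fin.castLE hn a) i * m a
          = ∑ a : Fin 3, (if Fin.castLE hn a = c then 1 else 0) * m a := by
        intro c
        have h1 : ∀ i, A i c * ∑ a : Fin 3, B (Fin.castLE hn a) i * m a
            = ∑ a : Fin 3, (B (Fin.castLE hn a) i * A i c) * m a := by
          intro i; rw [Finset.mul_sum]; exact Finset.sum_congr rfl fun a _ => by ring
        rw [Finset.sum_congr rfl fun i _ => h1 i, Finset.sum_comm]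
        exact Finset.sum_congr rfl fun a _ => by
          rw [← Finset.sum_mul, hBAe]
      rw [key]
      have : ∀ a : Fin 3, (Fin.castLE hn a = Fin.castLE hn b) ↔ a = b :=
        fun a => ⟨fun h => hcast h, fun h => h ▸ rfl⟩
      simp only [this]
      simp [Finset.sum_ite_eq']
  · -- the ω identity
    intro x hx ω
    have h := hrec x hx.2
    calc ∑ i, (x i : ℝ) * ω i
        = ∑ i, (∑ a : Fin 3, (B (Fin.castLE hn a) i : ℝ) *
            ((∑ j, A j (Fin.castLE hn a) * x j : ℤ) : ℝ)) * ω i := by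
          refine Finset.sum_congr rfl fun i _ => ?_
          congr 1
          rw [h i]
          push_cast
          ring
      _ = ∑ a : Fin 3, ((∑ i, A i (Fin.castLE hn a) * x i : ℤ) : ℝ) *
            ∑ i, (B (Fin.castLE hn a) i : ℝ) * ω i := by
          rw [Finset.sum_congr rfl fun i _ => Finset.sum_mul .., Finset.sum_comm]
          refine Finset.sum_congr rfl fun a _ => ?_
          rw [Finset.mul_sum]
          exact Finset.sum_congr rfl fun i _ => by ring
end

section
/- Insertion invariance: let u, v ∈ ℤ² with det₂[u,v] = 1, appearing consecutively in a complete unimodular fan, and insert w = u + v between them (so det₂[u,w] = det₂[w,v] = 1). Then the quantity Σ_k c_k − 3N (where N is the number of rays and u_{k−1}+u_{k+1} = c_k u_k) is unchanged by the insertion. -/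
/-!
Inserting `w = u_N + u_1` changes only three of the relations `u_{k-1} + u_{k+1} = c_k u_k`:
at `u_N` and `u_1` the new neighbor `w` contributes one extra copy of the ray itself, so
`c_N` and `c_1` grow by one, and at `w` the relation reads `u_N + u_1 = 1 • w`. Hence `Σ c_k`
grows by `3` while `N` grows by `1`. Each coefficient is determined by its relation because
every ray is nonzero, having determinant `1` with its successor.
-/

def det2 (u v : Fin 2 → ℤ) : ℤ := u 0 * v 1 - u 1 * v 0

namespace Fin

variable {N : ℕ} [NeZero N]

theorem val_neg_one : ((-1 : Fin N) : ℕ) = N - 1 := by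
  obtain ⟨n, rfl⟩ := Nat.exists_eq_succ_of_ne_zero (NeZero.ne N)
  simp [coe_neg_one]

theorem castSucc_add_one_of_ne_neg_one {j : Fin N} (h : j ≠ -1) :
    castSucc j + 1 = castSucc (j + 1) := by
  obtain ⟨n, rfl⟩ := Nat.exists_eq_succ_of_ne_zero (NeZero.ne N)
  have hj : j < last n := lt_of_le_of_ne (le_last j) fun hj => h (by ext; simp [hj, coe_neg_one])
  ext
  rw [val_add_one_of_lt (castSucc_lt_last j), val_castSucc, val_castSucc, val_add_one_of_lt hj]

theorem castSucc_neg_one_add_one : castSucc (-1 : Fin N) + 1 = last N := by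
  ext
  rw [coeSucc_eq_succ, val_succ, val_neg_one, val_last]
  have := NeZero.ne N
  omega

theorem castSucc_sub_one_of_ne_zero {j : Fin N} (h : j ≠ 0) :
    castSucc j - 1 = castSucc (j - 1) := by
  ext
  rw [val_castSucc, val_sub_one_of_ne_zero h, val_sub_one_of_ne_zero, val_castSucc]
  simpa using h

theorem last_sub_one_eq_castSucc : last N - 1 = castSucc (-1 : Fin N) := by
  rw [← castSucc_neg_one_add_one, add_sub_cancel_right]

theorem castSucc_zero_sub_one : castSucc (0 : Fin N) - 1 = last N := by
  ext
  rw [castSucc_zero', zero_sub, coe_neg_one, val_last]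

end Fin

section InsertWrapSum

variable {N : ℕ} [NeZero N] {M : Type*}

/-- Indices are cyclic, so the new entry at `last N` sits between `f (-1)` and `f 0`. -/
def insertWrapSum [Add M] (f : Fin N → M) : Fin (N + 1) → M :=
  Fin.snoc f (f (-1) + f 0)

@[simp]
theorem insertWrapSum_castSucc [Add M] (f : Fin N → M) (j : Fin N) :
    insertWrapSum f (Fin.castSucc j) = f j :=
  Fin.snoc_castSucc ..

@[simp]
theorem insertWrapSum_last [Add M] (f : Fin N → M) :
    insertWrapSum f (Fin.last N) = f (-1) + f 0 :=
  Fin.snoc_last ..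

theorem insertWrapSum_neighbor_sum_castSucc [AddCommMonoid M] (f : Fin N → M) (j : Fin N) :
    insertWrapSum f (Fin.castSucc j - 1) + insertWrapSum f (Fin.castSucc j + 1) =
      f (j - 1) + f (j + 1) + (if j = 0 then f j else 0) + (if j = -1 then f j else 0) := by
  by_cases h0 : j = 0 <;> by_cases h1 : j = -1
  · have hone : (1 : Fin N) = 0 := by rw [← neg_eq_zero, ← h1, h0]
    have hprev : Fin.castSucc j - 1 = Fin.last N := h0 ▸ Fin.castSucc_zero_sub_one
    have hnext : Fin.castSucc j + 1 = Fin.last N := h1 ▸ Fin.castSucc_neg_one_add_one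
    rw [hprev, hnext, insertWrapSum_last, if_pos h0, if_pos h1, ← h1, hone, sub_zero, add_zero,
      ← h0]
    abel
  · subst h0
    rw [Fin.castSucc_zero_sub_one, Fin.castSucc_add_one_of_ne_neg_one h1, insertWrapSum_last,
      insertWrapSum_castSucc, if_pos rfl, if_neg h1, zero_sub]
    abel
  · subst h1
    rw [Fin.castSucc_sub_one_of_ne_zero h0, Fin.castSucc_neg_one_add_one, insertWrapSum_last,
      insertWrapSum_castSucc, if_neg h0, if_pos rfl, neg_add_cancel]
    abel
  · rw [Fin.castSucc_sub_one_of_ne_zero h0, Fin.castSucc_add_one_of_ne_neg_one h1,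
      insertWrapSum_castSucc, insertWrapSum_castSucc, if_neg h0, if_neg h1, add_zero, add_zero]

theorem insertWrapSum_neighbor_sum_last [AddCommMonoid M] (f : Fin N → M) :
    insertWrapSum f (Fin.last N - 1) + insertWrapSum f (Fin.last N + 1) =
      insertWrapSum f (Fin.last N) := by
  rw [Fin.last_sub_one_eq_castSucc, Fin.last_add_one, ← Fin.castSucc_zero',
    insertWrapSum_castSucc, insertWrapSum_castSucc, insertWrapSum_last]

end InsertWrapSum

theorem ne_zero_of_det2_eq_one {u v : Fin 2 → ℤ} (h : det2 u v = 1) : u ≠ 0 := by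
  rintro rfl
  simp [det2] at h

section Fan

variable {N : ℕ} [NeZero N] {u : Fin N → Fin 2 → ℤ} {c : Fin N → ℤ}
  {c' : Fin (N + 1) → ℤ}

theorem insertWrapSum_coeff_castSucc (hdet : ∀ k, det2 (u k) (u (k + 1)) = 1)
    (hc : ∀ k, u (k - 1) + u (k + 1) = c k • u k)
    (hc' : ∀ k, insertWrapSum u (k - 1) + insertWrapSum u (k + 1) = c' k • insertWrapSum u k)
    (j : Fin N) :
    c' (Fin.castSucc j) = c j + (if j = 0 then 1 else 0) + (if j = -1 then 1 else 0) := by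
  apply smul_left_injective ℤ (ne_zero_of_det2_eq_one (hdet j))
  dsimp only
  rw [← insertWrapSum_castSucc u j, ← hc', insertWrapSum_neighbor_sum_castSucc, hc,
    insertWrapSum_castSucc, add_smul, add_smul, ite_smul, ite_smul, one_smul, zero_smul]

theorem insertWrapSum_coeff_last (hdet : ∀ k, det2 (u k) (u (k + 1)) = 1)
    (hc' : ∀ k, insertWrapSum u (k - 1) + insertWrapSum u (k + 1) = c' k • insertWrapSum u k) :
    c' (Fin.last N) = 1 := by
  have hne : insertWrapSum u (Fin.last N) ≠ 0 := by
    refine ne_zero_of_det2_eq_one (v := u 0) ?_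
    have h := hdet (-1)
    rw [neg_add_cancel] at h
    rw [insertWrapSum_last, ← h]
    simp only [det2, Pi.add_apply]
    ring
  apply smul_left_injective ℤ hne
  dsimp only
  rw [← hc', insertWrapSum_neighbor_sum_last, one_smul]

end Fan

/-- Insertion invariance: if the complete unimodular fan `u'₁,…,u'_{N+1}` is
obtained from the fan `u₁,…,u_N` by inserting `w = u_N + u₁` between the
cyclically consecutive rays `u_N` and `u₁` (so `det₂[u_N,w] = det₂[w,u₁] = 1`),
then the quantity `Σ_k c_k − 3N` (with `u_{k−1} + u_{k+1} = c_k·u_k`) is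
unchanged. -/
theorem fan_insertion_invariance (N : ℕ) [NeZero N] (hN : 3 ≤ N)
    (u : Fin N → Fin 2 → ℤ) (c : Fin N → ℤ)
    (u' : Fin (N + 1) → Fin 2 → ℤ) (c' : Fin (N + 1) → ℤ)
    (hdet : ∀ k, det2 (u k) (u (k + 1)) = 1)
    (hc : ∀ k, u (k - 1) + u (k + 1) = c k • u k)
    (hins : ∀ (k : Fin (N + 1)) (h : (k : ℕ) < N), u' k = u ⟨k, h⟩)
    (hlast : u' (Fin.last N) =
      u ⟨N - 1, by omega⟩ + u ⟨0, by omega⟩)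
    (hc' : ∀ k, u' (k - 1) + u' (k + 1) = c' k • u' k) :
    (∑ k : Fin (N + 1), c' k) - 3 * ((N : ℤ) + 1) =
      (∑ k : Fin N, c k) - 3 * (N : ℤ) := by
  have hu' : u' = insertWrapSum u := by
    funext k
    induction k using Fin.lastCases with
    | last =>
      rw [hlast, insertWrapSum_last]
      congr 2
      exact Fin.ext Fin.val_neg_one.symm
    | cast j => rw [hins _ j.isLt, insertWrapSum_castSucc]; rfl
  subst hu'
  rw [Fin.sum_univ_castSucc, insertWrapSum_coeff_last hdet hc',
    Finset.sum_congr rfl fun j _ => insertWrapSum_coeff_castSucc hdet hc hc' j,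
    Finset.sum_add_distrib, Finset.sum_add_distrib, Finset.sum_ite_eq', Finset.sum_ite_eq']
  simp only [Finset.mem_univ, if_true]
  ring
end
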